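/- In any vertex algebra $V$, the sum of two nil-ideals is a nil-ideal. Consequently, if $V$ is a finitely generated $\mathbb{C}[T]$-module, then $V$ has a unique maximal nil-ideal (the nilradical). -/

import Mathlib

open scoped BigOperators

/-- A vertex algebra structure on a complex vector space `V`.
`P n a b` denotes the `n`-th product `a_{(n)} b`, `vac` is the vacuum `𝟙`,
and `D` is the infinitesimal translation operator `T`. -/
structure VertexAlgebra (V : Type*) [AddCommGroup V] [Module ℂ V] where
  P : ℤ → V →ₗ[ℂ] V →ₗ[ℂ] V
  vac : V
  D : V →ₗ[ℂ] V
  field_ax : ∀ a b : V, ∃ N : ℕ, ∀ n : ℕ, N ≤ n → P n a b = 0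
  vac_field : ∀ (n : ℤ) (a : V), P n vac a = if n = -1 then a else 0
  creation : ∀ a : V, P (-1) a vac = a
  creation_pos : ∀ (a : V) (n : ℤ), 0 ≤ n → P n a vac = 0
  D_vac : D vac = 0
  transl_inv : ∀ (n : ℤ) (a b : V), P n (D a) b = (-n : ℂ) • P (n - 1) a b
  D_deriv : ∀ (n : ℤ) (a b : V), D (P n a b) = P n (D a) b + P n a (D b)
  skew : ∀ (n : ℤ) (a b : V),
    P n a b = ∑ᶠ j : ℕ, (((-1 : ℂ) ^ (n + j + 1)) / (j.factorial : ℂ)) • (D ^ j) (P (n + j) b a)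
  borcherds : ∀ (m k : ℤ) (a b c : V),
    P m a (P k b c) - P k b (P m a c)
      = ∑ᶠ j : ℕ, ((Ring.choose m j : ℤ) : ℂ) • P (m + k - j) (P j a b) c

namespace VertexAlgebra

variable {V : Type*} [AddCommGroup V] [Module ℂ V] (W : VertexAlgebra V)

/-- An ideal of a vertex algebra: a `ℂ[T]`-submodule closed under all products with
arbitrary elements of `V`. -/
def IsIdeal (I : Submodule ℂ V) : Prop :=
  (∀ x ∈ I, W.D x ∈ I) ∧ ∀ (a : V), ∀ b ∈ I, ∀ n : ℤ, W.P n a b ∈ I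

/-- `A · B`: the span of all products `a_{(j)} b`, `a ∈ A`, `b ∈ B`, `j ∈ ℤ`. -/
def prodSpan (A B : Submodule ℂ V) : Submodule ℂ V :=
  Submodule.span ℂ {x | ∃ a ∈ A, ∃ b ∈ B, ∃ j : ℤ, x = W.P j a b}

/-- `[A, B]`: the span of all products `a_{(j)} b`, `a ∈ A`, `b ∈ B`, `j ≥ 0`. -/
def posSpan (A B : Submodule ℂ V) : Submodule ℂ V :=
  Submodule.span ℂ {x | ∃ a ∈ A, ∃ b ∈ B, ∃ j : ℕ, x = W.P j a b}

/-- The sequence `I^1 = I`, `I^{n+1} = I^n · I^n` (indexed so that `nilSeq I n = I^{n+1}`). -/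
def nilSeq (I : Submodule ℂ V) : ℕ → Submodule ℂ V
  | 0 => I
  | n + 1 => W.prodSpan (nilSeq I n) (nilSeq I n)

/-- A nil-ideal: an ideal whose sequence of iterated self-products vanishes. -/
def IsNilIdeal (I : Submodule ℂ V) : Prop :=
  W.IsIdeal I ∧ ∃ n : ℕ, W.nilSeq I n = ⊥

/-- A vertex algebra is finite if it is a finitely generated `ℂ[T]`-module. -/
def IsFinite : Prop :=
  ∃ s : Finset V, ∀ v : V,
    v ∈ Submodule.span ℂ {x | ∃ g ∈ s, ∃ k : ℕ, x = (W.D ^ k) g}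

/-- Abelian ideal. -/
def IsAbelianIdeal (I : Submodule ℂ V) : Prop :=
  W.IsIdeal I ∧ ∀ a ∈ I, ∀ b ∈ I, ∀ n : ℤ, W.P n a b = 0

end VertexAlgebra

/-!
If `I^(m) = 0` and `J` is an ideal, then every product in `(I + J)^(m)` that involves a factor
from `J` lies in `J` (ideals absorb products on the left too, by skew-symmetry), so
`(I + J)^(m) ⊆ I^(m) + J = J` and hence `(I + J)^(m + k) ⊆ J^(k) = 0`.
Nil-ideals are `ℂ[T]`-submodules, and in a Noetherian `ℂ[T]`-module the nonempty, sup-closed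
family of nil-ideals contains its supremum, which is then the nilradical.
-/

open Polynomial

theorem CompleteLattice.isGreatest_sSup_of_supClosed {α : Type*} [CompleteLattice α]
    [WellFoundedGT α] {s : Set α} (hne : s.Nonempty) (hs : SupClosed s) :
    IsGreatest s (sSup s) :=
  ⟨(isSupClosedCompact_iff_wellFoundedGT α).mpr ‹_› s hne hs, fun _ ha => le_sSup ha⟩

theorem Module.AEval'.finite_of_forall_mem_span_pow {R M : Type*} [CommRing R] [AddCommGroup M]
    [Module R M] (f : Module.End R M) {s : Set M} (hs : s.Finite)
    (hspan : ∀ v : M, v ∈ Submodule.span R {x | ∃ g ∈ s, ∃ k : ℕ, x = (f ^ k) g}) :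
    Module.Finite R[X] (AEval' f) := by
  refine ⟨Submodule.fg_def.mpr
    ⟨AEval'.of f '' s, hs.image _, Submodule.eq_top_iff'.mpr fun v => ?_⟩⟩
  have hle : Submodule.span R {x | ∃ g ∈ s, ∃ k : ℕ, x = (f ^ k) g} ≤
      ((Submodule.span R[X] (AEval'.of f '' s)).restrictScalars R).comap
        (AEval'.of f).toLinearMap := by
    rw [Submodule.span_le]
    rintro _ ⟨g, hg, k, rfl⟩
    change AEval'.of f ((f ^ k) g) ∈ Submodule.span R[X] (AEval'.of f '' s)
    rw [← Module.End.smul_def, ← AEval'.X_pow_smul_of]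
    exact Submodule.smul_mem _ _ (Submodule.subset_span ⟨g, hg, rfl⟩)
  simpa using hle (hspan ((AEval'.of f).symm v))

namespace VertexAlgebra

variable {V : Type*} [AddCommGroup V] [Module ℂ V] {W : VertexAlgebra V}

namespace IsIdeal

variable {I J : Submodule ℂ V}

theorem pow_D_mem (hI : W.IsIdeal I) (j : ℕ) {x : V} (hx : x ∈ I) : (W.D ^ j) x ∈ I := by
  rw [Module.End.pow_apply]
  exact Set.MapsTo.iterate hI.1 j hx

theorem P_mem_of_left_mem (hI : W.IsIdeal I) {a : V} (ha : a ∈ I) (b : V) (n : ℤ) :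
    W.P n a b ∈ I := by
  rw [W.skew n a b]
  exact finsum_induction (· ∈ I) I.zero_mem (fun _ _ => I.add_mem)
    fun j => I.smul_mem _ (hI.pow_D_mem j (hI.2 b a ha _))

protected theorem sup (hI : W.IsIdeal I) (hJ : W.IsIdeal J) : W.IsIdeal (I ⊔ J) := by
  constructor
  · intro x hx
    obtain ⟨y, hy, z, hz, rfl⟩ := Submodule.mem_sup.mp hx
    rw [map_add]
    exact Submodule.add_mem_sup (hI.1 y hy) (hJ.1 z hz)
  · intro a x hx n
    obtain ⟨y, hy, z, hz, rfl⟩ := Submodule.mem_sup.mp hx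
    rw [map_add]
    exact Submodule.add_mem_sup (hI.2 a y hy n) (hJ.2 a z hz n)

end IsIdeal

variable (W)

theorem isIdeal_bot : W.IsIdeal ⊥ :=
  ⟨fun x hx => by simp [(Submodule.mem_bot ℂ).mp hx],
    fun a b hb n => by simp [(Submodule.mem_bot ℂ).mp hb]⟩

theorem prodSpan_mono {A B A' B' : Submodule ℂ V} (hA : A ≤ A') (hB : B ≤ B') :
    W.prodSpan A B ≤ W.prodSpan A' B' := by
  apply Submodule.span_mono
  rintro _ ⟨a, ha, b, hb, j, rfl⟩
  exact ⟨a, hA ha, b, hB hb, j, rfl⟩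

theorem prodSpan_sup_le {J : Submodule ℂ V} (hJ : W.IsIdeal J) (A B : Submodule ℂ V) :
    W.prodSpan (A ⊔ J) (B ⊔ J) ≤ W.prodSpan A B ⊔ J := by
  rw [prodSpan, Submodule.span_le]
  rintro _ ⟨_, hab, _, hab', j, rfl⟩
  obtain ⟨a, ha, a', ha', rfl⟩ := Submodule.mem_sup.mp hab
  obtain ⟨b, hb, b', hb', rfl⟩ := Submodule.mem_sup.mp hab'
  have hexpand : W.P j (a + a') (b + b') =
      W.P j a b + (W.P j a b' + (W.P j a' b + W.P j a' b')) := by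
    simp only [map_add, LinearMap.add_apply]
    abel
  rw [SetLike.mem_coe, hexpand]
  exact Submodule.add_mem_sup (Submodule.subset_span ⟨a, ha, b, hb, j, rfl⟩)
    (J.add_mem (hJ.2 a b' hb' j) (J.add_mem (hJ.P_mem_of_left_mem ha' b j) (hJ.2 a' b' hb' j)))

theorem nilSeq_mono {A B : Submodule ℂ V} (h : A ≤ B) (n : ℕ) :
    W.nilSeq A n ≤ W.nilSeq B n := by
  induction n with
  | zero => exact h
  | succ n ih => exact W.prodSpan_mono ih ih

theorem nilSeq_add (I : Submodule ℂ V) (m k : ℕ) :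
    W.nilSeq I (m + k) = W.nilSeq (W.nilSeq I m) k := by
  induction k with
  | zero => rfl
  | succ k ih => exact congrArg (fun A => W.prodSpan A A) ih

theorem nilSeq_sup_le {J : Submodule ℂ V} (hJ : W.IsIdeal J) (I : Submodule ℂ V) (n : ℕ) :
    W.nilSeq (I ⊔ J) n ≤ W.nilSeq I n ⊔ J := by
  induction n with
  | zero => exact le_rfl
  | succ n ih => exact (W.prodSpan_mono ih ih).trans (W.prodSpan_sup_le hJ _ _)

theorem isNilIdeal_bot : W.IsNilIdeal ⊥ :=
  ⟨W.isIdeal_bot, 0, rfl⟩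

variable {W}

theorem IsNilIdeal.sup {I J : Submodule ℂ V} (hI : W.IsNilIdeal I) (hJ : W.IsNilIdeal J) :
    W.IsNilIdeal (I ⊔ J) := by
  obtain ⟨hIideal, m, hm⟩ := hI
  obtain ⟨hJideal, k, hk⟩ := hJ
  have hle : W.nilSeq (I ⊔ J) m ≤ J := by
    simpa [hm] using W.nilSeq_sup_le hJideal I m
  refine ⟨hIideal.sup hJideal, m + k, le_bot_iff.mp ?_⟩
  rw [W.nilSeq_add, ← hk]
  exact W.nilSeq_mono hle k

theorem exists_isGreatest_isNilIdeal (hfin : W.IsFinite) :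
    ∃ N, IsGreatest {I : Submodule ℂ V | W.IsNilIdeal I} N := by
  obtain ⟨s, hs⟩ := hfin
  have : Module.Finite ℂ[X] (Module.AEval' W.D) :=
    Module.AEval'.finite_of_forall_mem_span_pow W.D s.finite_toSet hs
  let Φ := Module.AEval.mapSubmodule ℂ V W.D
  let S : Set (Submodule ℂ[X] (Module.AEval' W.D)) := {q | W.IsNilIdeal (Φ.symm q)}
  have hS : SupClosed S := fun q hq q' hq' => by
    simpa [S, map_sup] using hq.sup hq'
  obtain ⟨hN, hmax⟩ := CompleteLattice.isGreatest_sSup_of_supClosed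
    ⟨⊥, show W.IsNilIdeal (Φ.symm ⊥) by rw [map_bot]; exact W.isNilIdeal_bot⟩ hS
  refine ⟨Φ.symm (sSup S), hN, fun I hI => ?_⟩
  have hIS : Φ ⟨I, hI.1.1⟩ ∈ S := by simpa [S] using hI
  have hle := Φ.symm.monotone (hmax hIS)
  rwa [OrderIso.symm_apply_apply] at hle

end VertexAlgebra

open VertexAlgebra in
/-- the sum of two nil-ideals is a nil-ideal; consequently a finite vertex
algebra has a unique maximal nil-ideal (the nilradical). -/
theorem sum_of_nilideals_and_nilradical {V : Type*} [AddCommGroup V] [Module ℂ V]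
    (W : VertexAlgebra V) :
    (∀ I J : Submodule ℂ V, W.IsNilIdeal I → W.IsNilIdeal J → W.IsNilIdeal (I ⊔ J)) ∧
    (W.IsFinite → ∃ N : Submodule ℂ V, W.IsNilIdeal N ∧
      ∀ I : Submodule ℂ V, W.IsNilIdeal I → I ≤ N) :=
  ⟨fun _ _ hI hJ => hI.sup hJ, fun hfin => W.exists_isGreatest_isNilIdeal hfin⟩
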